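/- arXiv:2110.12849 — 2 statements merged into one kernel-verified Lean document; each statement's English description precedes it below -/
import Mathlib

section
/- For all α, β ∈ ℂ, the algebra 𝔠₂₆(α, β) on ℂ⁵ with nonzero basis products e₁e₁ = α e₅, e₁e₂ = e₃, e₂e₂ = β e₅, e₁e₃ = e₄ + e₅, e₂e₃ = e₄, e₃e₃ = e₅ is a nilpotent commutative algebra (A⁶ = 0) that satisfies the almost-Jordan identity 2·(((y·x)·x)·x) + y·((x·x)·x) = 3·((y·(x·x))·x) for all x, y, but does not satisfy the Jordan identity: there exist x, y with ((x·x)·y)·x ≠ (x·x)·(y·x). -/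
/-!
Give the basis vectors the weights `1, 1, 2, 3, 4`. Every nonzero structure constant
`eᵢ eⱼ ∋ e_k` satisfies `wt i + wt j ≤ wt k`, so a product of `n` elements has no component of
weight below `n`; as all weights are at most `4`, already every product of five elements vanishes.
In particular a product of three elements lies in `span {e₄, e₅}`, which annihilates `A`, so all
four terms of the almost-Jordan identity vanish, whereas `(x x) (y x)` is a product of two
elements of weight `2` and picks up `e₃ e₃ = e₅`; for `x = e₁ + e₂`, `y = e₁` it is nonzero.
-/
/-- `IsProdOf μ n z` says that `z` is a product of `n` elements under the
multiplication `μ`, with some arrangement of parentheses. -/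
inductive IsProdOf {V : Type*} (μ : V → V → V) : ℕ → V → Prop
  | base (x : V) : IsProdOf μ 1 x
  | mul {m n : ℕ} {a b : V} :
      IsProdOf μ m a → IsProdOf μ n b → IsProdOf μ (m + n) (μ a b)

/-- Structure constants of the algebra 𝔠₂₆(α, β) (e₁e₁ = α e₅, e₁e₂ = e₃, e₂e₂ = β e₅, e₁e₃ = e₄ + e₅, e₂e₃ = e₄, e₃e₃ = e₅) on ℂ⁵ (basis `e₁, …, e₅` indexed by `Fin 5`),
extended symmetrically; unlisted products of basis vectors are zero. -/
noncomputable def tbl26 (α β : ℂ) : Fin 5 → Fin 5 → Fin 5 → ℂ :=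
  ![![![0,0,0,0,α], ![0,0,1,0,0], ![0,0,0,1,1], 0, 0],
    ![![0,0,1,0,0], ![0,0,0,0,β], ![0,0,0,1,0], 0, 0],
    ![![0,0,0,1,1], ![0,0,0,1,0], ![0,0,0,0,1], 0, 0],
    0,
    0]

/-- The bilinear multiplication of the algebra on ℂ⁵. -/
noncomputable def mul26 (α β : ℂ) (x y : Fin 5 → ℂ) : Fin 5 → ℂ :=
  fun k => ∑ i, ∑ j, x i * y j * tbl26 α β i j k

open Finset

section WeightGraded

variable {R ι : Type*} [CommSemiring R] [Fintype ι]

def tableMul (T : ι → ι → ι → R) (x y : ι → R) : ι → R :=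
  fun k => ∑ i, ∑ j, x i * y j * T i j k

theorem tableMul_apply_eq_zero_of_weight {T : ι → ι → ι → R} {wt : ι → ℕ}
    (hT : ∀ i j k, T i j k ≠ 0 → wt i + wt j ≤ wt k) {m n : ℕ} {x y : ι → R}
    (hx : ∀ i, wt i < m → x i = 0) (hy : ∀ j, wt j < n → y j = 0) {k : ι}
    (hk : wt k < m + n) : tableMul T x y k = 0 := by
  refine sum_eq_zero fun i _ => sum_eq_zero fun j _ => ?_
  by_cases hijk : T i j k = 0
  · rw [hijk, mul_zero]
  have hgraded := hT i j k hijk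
  rcases (show wt i < m ∨ wt j < n by omega) with hi | hj
  · rw [hx i hi, zero_mul, zero_mul]
  · rw [hy j hj, mul_zero, zero_mul]

theorem IsProdOf.apply_eq_zero_of_weight_lt {T : ι → ι → ι → R} {wt : ι → ℕ}
    (hwt : ∀ i, 1 ≤ wt i) (hT : ∀ i j k, T i j k ≠ 0 → wt i + wt j ≤ wt k) {n : ℕ}
    {z : ι → R} (hz : IsProdOf (tableMul T) n z) : ∀ k, wt k < n → z k = 0 := by
  induction hz with
  | base x => exact fun k hk => absurd (hwt k) (by omega)
  | mul _ _ iha ihb => exact fun k => tableMul_apply_eq_zero_of_weight hT iha ihb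

end WeightGraded

theorem mul26_eq_tableMul (α β : ℂ) : mul26 α β = tableMul (tbl26 α β) := rfl

def wt26 : Fin 5 → ℕ := ![1, 1, 2, 3, 4]

theorem tbl26_weight_le (α β : ℂ) (i j k : Fin 5) (h : tbl26 α β i j k ≠ 0) :
    wt26 i + wt26 j ≤ wt26 k := by
  fin_cases i <;> fin_cases j <;> fin_cases k <;> simp [tbl26, wt26] at h ⊢

theorem mul26_eq (α β : ℂ) (x y : Fin 5 → ℂ) :
    mul26 α β x y = ![0, 0, x 0 * y 1 + x 1 * y 0,
      x 0 * y 2 + x 2 * y 0 + x 1 * y 2 + x 2 * y 1,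
      α * (x 0 * y 0) + x 0 * y 2 + x 2 * y 0 + β * (x 1 * y 1) + x 2 * y 2] := by
  funext k
  fin_cases k <;> simp [mul26, tbl26, Fin.sum_univ_five] <;> ring

theorem mul26_comm (α β : ℂ) (x y : Fin 5 → ℂ) : mul26 α β x y = mul26 α β y x := by
  funext k
  fin_cases k <;> simp [mul26_eq] <;> ring

theorem mul26_nilpotent (α β : ℂ) {n : ℕ} (hn : 5 ≤ n) {z : Fin 5 → ℂ}
    (hz : IsProdOf (mul26 α β) n z) : z = 0 := by
  rw [mul26_eq_tableMul] at hz
  funext k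
  exact hz.apply_eq_zero_of_weight_lt (by decide) (tbl26_weight_le α β) k (by fin_cases k <;> simp [wt26] <;> omega)

theorem mul26_almost_jordan (α β : ℂ) (x y : Fin 5 → ℂ) :
    (2 : ℂ) • mul26 α β (mul26 α β (mul26 α β y x) x) x + mul26 α β y (mul26 α β (mul26 α β x x) x) =
      (3 : ℂ) • mul26 α β (mul26 α β y (mul26 α β x x)) x := by
  funext k
  fin_cases k <;> simp [mul26_eq]

theorem mul26_not_jordan (α β : ℂ) :
    mul26 α β (mul26 α β (mul26 α β ![1, 1, 0, 0, 0] ![1, 1, 0, 0, 0]) ![1, 0, 0, 0, 0])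
        ![1, 1, 0, 0, 0] ≠
      mul26 α β (mul26 α β ![1, 1, 0, 0, 0] ![1, 1, 0, 0, 0])
        (mul26 α β ![1, 0, 0, 0, 0] ![1, 1, 0, 0, 0]) := by
  intro h
  have h4 := congrFun h 4
  simp [mul26_eq] at h4
  norm_num at h4

/-- The algebra is nilpotent (A⁶ = 0), commutative, satisfies the almost-Jordan identity, but does not satisfy the Jordan identity. -/
theorem c26_properties (α β : ℂ) :
    (∀ x y : Fin 5 → ℂ, mul26 α β x y = mul26 α β y x) ∧
    (∀ z : Fin 5 → ℂ, IsProdOf (mul26 α β) 6 z → z = 0) ∧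
    (∀ x y : Fin 5 → ℂ,
        (2 : ℂ) • mul26 α β (mul26 α β (mul26 α β y x) x) x + mul26 α β y (mul26 α β (mul26 α β x x) x) =
          (3 : ℂ) • mul26 α β (mul26 α β y (mul26 α β x x)) x) ∧
    (∃ x y : Fin 5 → ℂ,
        mul26 α β (mul26 α β (mul26 α β x x) y) x ≠ mul26 α β (mul26 α β x x) (mul26 α β y x)) :=
  ⟨mul26_comm α β, fun _ => mul26_nilpotent α β (by norm_num), mul26_almost_jordan α β,
    _, _, mul26_not_jordan α β⟩
end

section
/- The algebra 𝒥₂₁ on ℂ⁵ with nonzero basis products e₁e₁ = e₅, e₁e₂ = e₄, e₂e₂ = e₅, e₃e₃ = e₄, e₃e₄ = e₅ is a nilpotent commutative algebra (A⁶ = 0) that satisfies the Jordan identity ((x·x)·y)·x = (x·x)·(y·x) for all x, y. -/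
/-- Structure constants of the algebra 𝒥₂₁ (e₁e₁ = e₅, e₁e₂ = e₄, e₂e₂ = e₅, e₃e₃ = e₄, e₃e₄ = e₅) on ℂ⁵ (basis `e₁, …, e₅` indexed by `Fin 5`),
extended symmetrically; unlisted products of basis vectors are zero. -/
noncomputable def tblJ21 : Fin 5 → Fin 5 → Fin 5 → ℂ :=
  ![![![0,0,0,0,1], ![0,0,0,1,0], 0, 0, 0],
    ![![0,0,0,1,0], ![0,0,0,0,1], 0, 0, 0],
    ![0, 0, ![0,0,0,1,0], ![0,0,0,0,1], 0],
    ![0, 0, ![0,0,0,0,1], 0, 0],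
    0]

/-- The bilinear multiplication of the algebra on ℂ⁵. -/
noncomputable def mulJ21 (x y : Fin 5 → ℂ) : Fin 5 → ℂ :=
  fun k => ∑ i, ∑ j, x i * y j * tblJ21 i j k

/-!
Grade the basis by `e₁, e₂, e₃ ↦ 1`, `e₄ ↦ 2`, `e₅ ↦ 3`. Every nonzero structure constant
`eᵢ eⱼ = e_k` has `deg i + deg j ≤ deg k`, so a product of `n` factors is supported on the
basis vectors of degree `≥ n`. As all degrees are at most `3`, every product of four factors
vanishes: this gives `A⁶ = 0`, and it makes both sides of the Jordan identity zero.
-/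

theorem IsProdOf.mem_of_mul_mem {V : Type*} {μ : V → V → V} {F : ℕ → Set V}
    (hF₁ : ∀ x, x ∈ F 1) (hF : ∀ {m n a b}, a ∈ F m → b ∈ F n → μ a b ∈ F (m + n))
    {n : ℕ} {z : V} (h : IsProdOf μ n z) : z ∈ F n := by
  induction h with
  | base x => exact hF₁ x
  | mul _ _ iha ihb => exact hF iha ihb

section StructureConstants

variable {ι R : Type*} [Fintype ι] [CommSemiring R]

def structMul (c : ι → ι → ι → R) (x y : ι → R) : ι → R :=
  fun k => ∑ i, ∑ j, x i * y j * c i j k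

theorem structMul_comm {c : ι → ι → ι → R} (hc : ∀ i j k, c i j k = c j i k) (x y : ι → R) :
    structMul c x y = structMul c y x := by
  funext k
  rw [structMul, structMul, Finset.sum_comm]
  simp only [hc _ _ k, mul_comm (x _)]

def vanishesBelow (deg : ι → ℕ) (n : ℕ) : Set (ι → R) :=
  {z | ∀ k, deg k < n → z k = 0}

theorem structMul_mem_vanishesBelow {c : ι → ι → ι → R} {deg : ι → ℕ}
    (hc : ∀ i j k, c i j k ≠ 0 → deg i + deg j ≤ deg k) {m n : ℕ} {a b : ι → R}
    (ha : a ∈ vanishesBelow deg m) (hb : b ∈ vanishesBelow deg n) :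
    structMul c a b ∈ vanishesBelow deg (m + n) := by
  intro k hk
  refine Finset.sum_eq_zero fun i _ => Finset.sum_eq_zero fun j _ => ?_
  by_cases hcijk : c i j k = 0
  · rw [hcijk, mul_zero]
  have := hc i j k hcijk
  by_cases hi : deg i < m
  · rw [ha i hi, zero_mul, zero_mul]
  · rw [hb j (by omega), mul_zero, zero_mul]

theorem IsProdOf.structMul_eq_zero {c : ι → ι → ι → R} {deg : ι → ℕ}
    (hc : ∀ i j k, c i j k ≠ 0 → deg i + deg j ≤ deg k) (hdeg : ∀ k, 0 < deg k)
    {n : ℕ} {z : ι → R} (h : IsProdOf (structMul c) n z) (hn : ∀ k, deg k < n) : z = 0 := by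
  have hz : z ∈ vanishesBelow deg n :=
    h.mem_of_mul_mem (fun _ k hk => absurd (hdeg k) (by omega))
      (structMul_mem_vanishesBelow hc)
  exact funext fun k => hz k (hn k)

end StructureConstants

theorem tblJ21_symm (i j k : Fin 5) : tblJ21 i j k = tblJ21 j i k := by
  fin_cases i <;> fin_cases j <;> fin_cases k <;> simp [tblJ21]

def degJ21 : Fin 5 → ℕ := ![1, 1, 1, 2, 3]

theorem tblJ21_graded (i j k : Fin 5) (h : tblJ21 i j k ≠ 0) :
    degJ21 i + degJ21 j ≤ degJ21 k := by
  fin_cases i <;> fin_cases j <;> fin_cases k <;> simp_all [tblJ21, degJ21]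

theorem IsProdOf.mulJ21_eq_zero {n : ℕ} {z : Fin 5 → ℂ} (h : IsProdOf mulJ21 n z)
    (hn : 4 ≤ n) : z = 0 :=
  IsProdOf.structMul_eq_zero tblJ21_graded (by decide) h fun k => by
    fin_cases k <;> simp [degJ21] <;> omega

/-- The algebra 𝒥₂₁ is a nilpotent (A⁶ = 0) commutative algebra satisfying the Jordan identity. -/
theorem J21_properties :
    (∀ x y : Fin 5 → ℂ, mulJ21 x y = mulJ21 y x) ∧
    (∀ z : Fin 5 → ℂ, IsProdOf (mulJ21) 6 z → z = 0) ∧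
    (∀ x y : Fin 5 → ℂ,
        mulJ21 (mulJ21 (mulJ21 x x) y) x = mulJ21 (mulJ21 x x) (mulJ21 y x)) := by
  refine ⟨structMul_comm tblJ21_symm, fun z hz => hz.mulJ21_eq_zero (by norm_num),
    fun x y => ?_⟩
  have hxx : IsProdOf mulJ21 2 (mulJ21 x x) := .mul (.base x) (.base x)
  rw [IsProdOf.mulJ21_eq_zero (.mul (.mul hxx (.base y)) (.base x)) le_rfl,
    IsProdOf.mulJ21_eq_zero (.mul hxx (.mul (.base y) (.base x))) le_rfl]
end
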